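/- arXiv:2406.02165 — 3 statements merged into one kernel-verified Lean document; each statement's English description precedes it below -/
import Mathlib

section
/- Let (Ω, F, P) be a probability space, A ≥ 1 a natural number, π : {1,…,A} → ℝ with π(a) ≥ 0, and let (X_{a,i})_{a∈{1,…,A}, i∈ℕ} be a mutually independent family of square-integrable real random variables such that for every a and i, X_{a,i} has mean μ(a) and variance σ(a)², with σ(a) ≥ 0 denoting the standard deviation. Then for every allocation T : {1,…,A} → ℕ with T(a) ≥ 1 for all a and Σ_a T(a) = n, the estimator Y_T := Σ_a π(a)·(1/T(a))·Σ_{i=1}^{T(a)} X_{a,i} satisfies E[(Y_T − V)²] ≥ (Σ_a π(a)·σ(a))²/n, where V := Σ_a π(a)·μ(a). -/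
/-!
The plug-in estimator is a weighted sum of independent samples, `π a / T a` on each sample of
arm `a`. It is unbiased, so its mean squared error is its variance, which by independence is
`∑ a, (π a * σ a) ^ 2 / T a`. Sedrakyan's form of Cauchy–Schwarz bounds this from below by
`(∑ a, π a * σ a) ^ 2 / ∑ a, T a`.
-/

open MeasureTheory ProbabilityTheory Finset

theorem sum_sigma_range_div {ι K : Type*} [Semifield K] [CharZero K] (s : Finset ι)
    (T : ι → ℕ) (hT : ∀ a ∈ s, T a ≠ 0) (f : ι → K) :
    ∑ p ∈ s.sigma (fun a => range (T a)), f p.1 / T p.1 = ∑ a ∈ s, f a := by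
  rw [sum_sigma]
  refine sum_congr rfl fun a ha => ?_
  dsimp only
  rw [sum_const, card_range, nsmul_eq_mul, mul_div_cancel₀ _ (Nat.cast_ne_zero.mpr (hT a ha))]

theorem variance_sum_const_mul {Ω ι : Type*} [MeasurableSpace Ω] {P : Measure Ω}
    {X : ι → Ω → ℝ} {s : Finset ι} (hL2 : ∀ i ∈ s, MemLp (X i) 2 P)
    (hindep : Set.Pairwise ↑s fun i j => X i ⟂ᵢ[P] X j) (c : ι → ℝ) :
    variance (fun ω => ∑ i ∈ s, c i * X i ω) P = ∑ i ∈ s, c i ^ 2 * variance (X i) P := by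
  have hsum := IndepFun.variance_sum (X := fun i ω => c i * X i ω)
    (fun i hi => (hL2 i hi).const_mul (c i))
    (fun i hi j hj hij => (hindep hi hj hij).comp (measurable_const_mul (c i))
      (measurable_const_mul (c j)))
  simpa only [Finset.sum_fn, variance_const_mul] using hsum

theorem bandit_mse_lower_bound_general
    {Ω : Type*} [MeasurableSpace Ω] (P : Measure Ω) [IsProbabilityMeasure P]
    (A : ℕ) (π : Fin A → ℝ)
    (X : Fin A × ℕ → Ω → ℝ) (μ σ : Fin A → ℝ)
    (hindep : iIndepFun X P)
    (hL2 : ∀ ai, MemLp (X ai) 2 P)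
    (hmean : ∀ a i, ∫ ω, X (a, i) ω ∂P = μ a)
    (hvar : ∀ a i, variance (X (a, i)) P = σ a ^ 2)
    (T : Fin A → ℕ) (hT : ∀ a, 1 ≤ T a) (n : ℕ) (hn : ∑ a, T a = n) :
    (∑ a, π a * σ a) ^ 2 / (n : ℝ)
      ≤ ∫ ω, ((∑ a, π a * ((1 / (T a : ℝ)) * ∑ i ∈ Finset.range (T a), X (a, i) ω))
          - ∑ a, π a * μ a) ^ 2 ∂P := by
  have hT₀ : ∀ a ∈ univ, T a ≠ 0 := fun a _ => Nat.one_le_iff_ne_zero.mp (hT a)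
  set e := Equiv.sigmaEquivProd (Fin A) ℕ
  set S := univ.sigma fun a => range (T a)
  set Y : Ω → ℝ := fun ω => ∑ p ∈ S, π p.1 / T p.1 * X (e p) ω
  have hY : ∀ ω, ∑ a, π a * ((1 / (T a : ℝ)) * ∑ i ∈ range (T a), X (a, i) ω) = Y ω := by
    intro ω
    simp only [Y, S, sum_sigma, ← mul_sum, ← mul_assoc, mul_one_div]
    rfl
  have hYm : AEMeasurable Y P :=
    Finset.aemeasurable_fun_sum S fun p _ => (hL2 (e p)).aemeasurable.const_mul _
  have hmeanY : ∫ ω, Y ω ∂P = ∑ a, π a * μ a := by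
    rw [integral_finsetSum _ fun p _ => ((hL2 (e p)).integrable one_le_two).const_mul _]
    simp only [integral_const_mul, e, Equiv.sigmaEquivProd_apply, hmean]
    simpa only [div_mul_eq_mul_div] using sum_sigma_range_div univ T hT₀ fun a => π a * μ a
  have hvarY : variance Y P = ∑ a, (π a * σ a) ^ 2 / T a := by
    rw [variance_sum_const_mul (fun p _ => hL2 (e p))
      (fun p _ q _ hpq => hindep.indepFun (e.injective.ne hpq)), ← sum_sigma_range_div univ T hT₀]
    refine sum_congr rfl fun p _ => ?_
    simp only [e, Equiv.sigmaEquivProd_apply, hvar]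
    ring
  simp_rw [hY, ← hmeanY, ← variance_eq_integral hYm, hvarY, ← hn, Nat.cast_sum]
  exact sq_sum_div_le_sum_sq_div _ _ fun a _ => Nat.cast_pos.mpr (hT a)

/-- Bandit optimal-proportion lower bound: with mutually independent samples `X (a, i)` of
mean `μ a`, variance `σ a ^ 2` (standard deviation `σ a ≥ 0`), any deterministic allocation
`T` of a total budget `n = ∑ a, T a` with `T a ≥ 1` gives MSE of the plug-in policy-value
estimator at least the oracle value `(∑ a, π a · σ a)² / n`. -/
theorem bandit_mse_lower_bound
    {Ω : Type*} [MeasurableSpace Ω] (P : Measure Ω) [IsProbabilityMeasure P]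
    (A : ℕ) (hA : 1 ≤ A) (π : Fin A → ℝ) (hπ : ∀ a, 0 ≤ π a)
    (X : Fin A × ℕ → Ω → ℝ) (μ σ : Fin A → ℝ) (hσ : ∀ a, 0 ≤ σ a)
    (hindep : iIndepFun X P)
    (hL2 : ∀ ai, MemLp (X ai) 2 P)
    (hmean : ∀ a i, ∫ ω, X (a, i) ω ∂P = μ a)
    (hvar : ∀ a i, variance (X (a, i)) P = σ a ^ 2)
    (T : Fin A → ℕ) (hT : ∀ a, 1 ≤ T a) (n : ℕ) (hn : ∑ a, T a = n) :
    (∑ a, π a * σ a) ^ 2 / (n : ℝ)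
      ≤ ∫ ω, ((∑ a, π a * ((1 / (T a : ℝ)) * ∑ i ∈ Finset.range (T a), X (a, i) ω))
          - ∑ a, π a * μ a) ^ 2 ∂P :=
  bandit_mse_lower_bound_general P A π X μ σ hindep hL2 hmean hvar T hT n hn
end

section
/- Let n > 0 be a real number and let T₀, T₁, T₂ > 0 be real numbers with T₀ + T₁ + T₂ = n and (3/4)·T₁ + (1/2)·T₀ ≥ (3/8)·n. Then (1/1000)/T₀ + (1/1000)/T₁ + (1/4)/T₂ − (2·√(1/1000) + 1/2)²/n ≥ (9/50)/n. -/
/-- Arithmetic core of the intractability construction: any allocation of budget `n`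
to three arms with variances `1/1000, 1/1000, 1/4` satisfying the safety constraint
`(3/4)·T₁ + (1/2)·T₀ ≥ (3/8)·n` incurs excess MSE over the unconstrained oracle of at
least `(9/50)/n`. -/
theorem intractable_bandit_regret (n T₀ T₁ T₂ : ℝ) (hn : 0 < n)
    (h0 : 0 < T₀) (h1 : 0 < T₁) (h2 : 0 < T₂) (hsum : T₀ + T₁ + T₂ = n)
    (hsafe : (3 / 4) * T₁ + (1 / 2) * T₀ ≥ (3 / 8) * n) :
    (1 / 1000) / T₀ + (1 / 1000) / T₁ + (1 / 4) / T₂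
      - (2 * Real.sqrt (1 / 1000) + 1 / 2) ^ 2 / n ≥ (9 / 50) / n := by
  set s := Real.sqrt (1 / 1000) with hs_def
  have hs0 : 0 ≤ s := Real.sqrt_nonneg _
  have hs : s ≤ 33 / 1000 := by
    rw [hs_def, show (1 / 1000 : ℝ) = (33/1000)^2 - 89/1000000 by norm_num]
    calc Real.sqrt ((33/1000)^2 - 89/1000000) ≤ Real.sqrt ((33/1000)^2) :=
          Real.sqrt_le_sqrt (by norm_num)
      _ = 33/1000 := Real.sqrt_sq (by norm_num)
  have hT01 : n / 2 ≤ T₀ + T₁ := by linarith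
  have hT2 : T₂ ≤ n / 2 := by linarith
  have hB : (1 / 2) / n ≤ (1 / 4) / T₂ := by
    rw [div_le_div_iff₀ hn h2]; linarith
  have hA : (4 / 1000) / n ≤ (1 / 1000) / T₀ + (1 / 1000) / T₁ := by
    have h4n : 4 / n ≤ 1 / T₀ + 1 / T₁ := by
      rw [div_add_div _ _ h0.ne' h1.ne', div_le_div_iff₀ hn (mul_pos h0 h1)]
      nlinarith [sq_nonneg (T₀ - T₁)]
    calc (4 / 1000) / n = (1 / 1000) * (4 / n) := by ring
      _ ≤ (1 / 1000) * (1 / T₀ + 1 / T₁) := by nlinarith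
      _ = (1 / 1000) / T₀ + (1 / 1000) / T₁ := by ring
  have hC : (2 * s + 1 / 2) ^ 2 / n ≤ (80089 / 250000) / n := by
    gcongr
    nlinarith [hs, hs0]
  calc (9 / 50) / n ≤ (45911 / 250000) / n := by
        rw [div_le_div_iff₀ hn hn]; nlinarith
    _ = (4 / 1000) / n + (1 / 2) / n - (80089 / 250000) / n := by ring
    _ ≤ (1 / 1000) / T₀ + (1 / 1000) / T₁ + (1 / 4) / T₂
        - (2 * s + 1 / 2) ^ 2 / n := by linarith
end

section
/- Let A ≥ 1 and n be natural numbers with n ≥ 4A. Let b : {1,…,A} → ℝ with b(a) > 0 for all a and Σ_a b(a) = 1, and let T : {1,…,A} → ℕ with T(a) ≥ 2 for all a and Σ_a T(a) = n. Assume that for all p and p' with T(p') ≥ 3 one has b(p)/T(p) ≤ b(p')/(T(p') − 1). Then for every p: n·b(p) − 4A·b(p) ≤ (T(p) : ℝ) ≤ n·b(p) + 4A. -/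
open Finset

/-- Deterministic tracking lemma: if the sample counts `T` satisfy the ratio invariant
`b p / T p ≤ b p' / (T p' − 1)` for all actions `p'` sampled after initialization, then
every count matches its optimal allocation `n·b p` up to an additive `4A` term. -/
theorem tracking_lemma (A n : ℕ) (hA : 1 ≤ A) (hn : 4 * A ≤ n)
    (b : Fin A → ℝ) (hb : ∀ a, 0 < b a) (hbsum : ∑ a, b a = 1)
    (T : Fin A → ℕ) (hT : ∀ a, 2 ≤ T a) (hTsum : ∑ a, T a = n)
    (hinv : ∀ p p', 3 ≤ T p' → b p / (T p : ℝ) ≤ b p' / ((T p' : ℝ) - 1)) :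
    ∀ p, (n : ℝ) * b p - 4 * A * b p ≤ (T p : ℝ) ∧ (T p : ℝ) ≤ (n : ℝ) * b p + 4 * A := by
  intro p
  have hbp := hb p
  have hTpR : (2:ℝ) ≤ (T p : ℝ) := by exact_mod_cast hT p
  have hTppos : (0:ℝ) < (T p : ℝ) := by linarith
  have hAR : (1:ℝ) ≤ (A:ℝ) := by exact_mod_cast hA
  have hsumT : ∑ a, ((T a : ℝ)) = (n:ℝ) := by rw [← Nat.cast_sum, hTsum]
  constructor
  · -- lower bound
    have key : ∀ a, (T a : ℝ) ≤ (T p : ℝ) * b a / b p + 2 := by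
      intro a
      rcases le_or_gt 3 (T a) with h3 | h3
      · have hinv' := hinv p a h3
        have hTa : (3:ℝ) ≤ (T a : ℝ) := by exact_mod_cast h3
        have hTa1 : (0:ℝ) < (T a : ℝ) - 1 := by linarith
        rw [div_le_div_iff₀ hTppos hTa1] at hinv'
        have hba := hb a
        rw [div_add' _ _ _ (ne_of_gt hbp), le_div_iff₀ hbp]
        nlinarith
      · have h2 : T a = 2 := le_antisymm (by omega) (hT a)
        have h2R : (T a : ℝ) = 2 := by exact_mod_cast h2
        have hba := hb a
        have hpos : 0 ≤ (T p : ℝ) * b a / b p :=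
          div_nonneg (mul_nonneg hTppos.le hba.le) hbp.le
        rw [h2R]; linarith
    have hsum : (n:ℝ) ≤ (T p : ℝ) / b p + 2 * A := by
      have hs := Finset.sum_le_sum (fun a (_ : a ∈ Finset.univ) => key a)
      have h2 : ∑ a, ((T p : ℝ) * b a / b p + 2) = (T p : ℝ) / b p + 2 * A := by
        rw [Finset.sum_add_distrib, ← Finset.sum_div, ← Finset.mul_sum, hbsum, mul_one]
        simp [Finset.card_univ, mul_comm]
      rw [hsumT, h2] at hs
      exact hs
    have h3 : ((n:ℝ) - 2*A) * b p ≤ (T p : ℝ) := by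
      rw [← le_div_iff₀ hbp]; linarith
    nlinarith
  · -- upper bound
    rcases le_or_gt 3 (T p) with h3 | h3
    · have key : ∀ a, ((T p : ℝ) - 1) * b a / b p ≤ (T a : ℝ) := by
        intro a
        have hinv' := hinv a p h3
        have hTa : (0:ℝ) < (T a : ℝ) := by
          have := hT a; have : (2:ℝ) ≤ (T a : ℝ) := by exact_mod_cast this
          linarith
        have hTp1 : (0:ℝ) < (T p : ℝ) - 1 := by linarith
        rw [div_le_div_iff₀ hTa hTp1] at hinv'
        rw [div_le_iff₀ hbp]
        nlinarith
      have hsum : ((T p : ℝ) - 1) / b p ≤ (n:ℝ) := by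
        have hs := Finset.sum_le_sum (fun a (_ : a ∈ Finset.univ) => key a)
        have h2 : ∑ a, (((T p : ℝ) - 1) * b a / b p) = ((T p : ℝ) - 1) / b p := by
          rw [← Finset.sum_div, ← Finset.mul_sum, hbsum, mul_one]
        rw [hsumT, h2] at hs
        exact hs
      have h4 : (T p : ℝ) - 1 ≤ (n:ℝ) * b p := by
        rw [div_le_iff₀ hbp] at hsum; linarith [hsum]
      nlinarith
    · have hTp2 : (T p : ℝ) ≤ 2 := by
        have : T p ≤ 2 := by omega
        exact_mod_cast this
      have : (0:ℝ) ≤ (n:ℝ) * b p := by positivity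
      nlinarith
end
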